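/- The function x̂ satisfies |x̂(t + h) − x̂(t)| ≤ ω(h) for all h ∈ (0,1) and t ∈ [0, 1 − h], where ω(h) = (1 + 1/√2)·h·2^{ν(h)/2} + (1/3)(2√2 + 2)·2^{−ν(h)/2} and ν(h) = ⌊−log₂ h⌋. -/

import Mathlib

/-!
Write `d x` for the distance from `x` to the nearest integer. On `[0, 1]` the level-`m`
Faber–Schauder sum is `2^(-m/2) d(2^m t)`, so `x̂` is the Takagi–Landsberg function
`T(x) = ∑ 2^(-m/2) d(2^m x)`, and `d a - d b ≤ d (a - b)` gives `|T(t + h) - T(t)| ≤ T(h)`.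
For `N = ν(h)` we have `2^N h ∈ [1/2, 1]`: the first `N` terms of `T(h)` are exactly
`2^(m/2) h`, and the tail is `2^(-N/2) T(1 - 2^N h)`. On `[0, 1/2]` the functional equation
`T(u) = u + T(2u)/√2` and the symmetry `T(1 - u) = T(u)` return to `[0, 1/2]` within two steps,
shrinking any additive error in the affine bound `T(u) ≤ (√2 + 4)/6 + u/√2` by the factor `1/√2`;
so that bound holds exactly, and it controls the tail.
-/

noncomputable def e00 (t : ℝ) : ℝ := max (min t (1 - t)) 0

noncomputable def e (m : ℕ) (k : ℤ) (t : ℝ) : ℝ :=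
  (2 : ℝ) ^ (-(m : ℝ) / 2) * e00 ((2 : ℝ) ^ m * t - k)

noncomputable def xhat (t : ℝ) : ℝ :=
  ∑' m : ℕ, ∑ k ∈ Finset.range (2 ^ m), e m k t

noncomputable def ν (h : ℝ) : ℤ := ⌊-Real.logb 2 h⌋

noncomputable def ω (h : ℝ) : ℝ :=
  (1 + 1 / Real.sqrt 2) * h * (2 : ℝ) ^ ((ν h : ℝ) / 2)
    + (1 / 3) * (2 * Real.sqrt 2 + 2) * (2 : ℝ) ^ (-(ν h : ℝ) / 2)

open Real Set

noncomputable def distInt (x : ℝ) : ℝ := |x - round x|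

lemma distInt_le_half (x : ℝ) : distInt x ≤ 1 / 2 := abs_sub_round x

lemma distInt_add_intCast (x : ℝ) (n : ℤ) : distInt (x + n) = distInt x := by
  simp only [distInt, round_add_intCast, Int.cast_add, add_sub_add_right_eq_sub]

lemma distInt_neg_le (x : ℝ) : distInt (-x) ≤ distInt x :=
  (round_le (-x) (-round x)).trans_eq (by rw [distInt, ← abs_neg]; push_cast; ring_nf)

lemma distInt_neg (x : ℝ) : distInt (-x) = distInt x :=
  (distInt_neg_le x).antisymm (by simpa using distInt_neg_le (-x))

lemma distInt_sub_distInt_le (a b : ℝ) : distInt a - distInt b ≤ distInt (a - b) := by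
  have hround : distInt a ≤ |a - ((round b + round (a - b) : ℤ) : ℝ)| := round_le _ _
  have htri : |a - ((round b + round (a - b) : ℤ) : ℝ)| ≤ distInt b + distInt (a - b) := by
    push_cast
    exact (abs_add_le _ _).trans_eq' (by ring_nf)
  linarith

lemma distInt_eq_min {x : ℝ} (h0 : 0 ≤ x) (h1 : x < 1) : distInt x = min x (1 - x) := by
  rw [distInt, abs_sub_round_eq_min, Int.fract_eq_self.mpr ⟨h0, h1⟩]

lemma distInt_of_mem_Icc {x : ℝ} (hx : x ∈ Icc 0 (1 / 2)) : distInt x = x := by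
  rw [distInt_eq_min hx.1 (by linarith [hx.2]), min_eq_left (by linarith [hx.2])]

lemma e00_of_nonpos {x : ℝ} (hx : x ≤ 0) : e00 x = 0 :=
  max_eq_right (min_le_of_left_le hx)

lemma e00_of_one_le {x : ℝ} (hx : 1 ≤ x) : e00 x = 0 :=
  max_eq_right (min_le_of_right_le (by linarith))

lemma e00_eq_distInt {x : ℝ} (hx : x ∈ Icc 0 1) : e00 x = distInt x := by
  obtain ⟨h0, h1⟩ := hx
  rcases h1.lt_or_eq with h1 | rfl
  · rw [distInt_eq_min h0 h1, e00, max_eq_left (le_min h0 (by linarith))]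
  · simp [e00, distInt]

lemma sum_range_e00_sub {N : ℕ} {s : ℝ} (hs : s ∈ Icc 0 (N : ℝ)) :
    ∑ k ∈ Finset.range N, e00 (s - k) = distInt s := by
  induction N generalizing s with
  | zero =>
    obtain rfl : s = 0 := le_antisymm (by simpa using hs.2) hs.1
    simp [distInt]
  | succ N ih =>
    obtain ⟨h0, hN⟩ := hs
    rw [Finset.sum_range_succ', Nat.cast_zero, sub_zero]
    rcases le_total s 1 with h1 | h1
    · rw [Finset.sum_eq_zero fun k _ => e00_of_nonpos (by push_cast; linarith), zero_add,
        e00_eq_distInt ⟨h0, h1⟩]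
    · have hshift := ih (s := s - 1) ⟨by linarith, by push_cast at hN; linarith⟩
      have hper : distInt s = distInt (s - 1) := by simpa using distInt_add_intCast (s - 1) 1
      rw [e00_of_one_le h1, add_zero, hper, ← hshift]
      exact Finset.sum_congr rfl fun k _ => by push_cast; ring_nf

noncomputable def takagiLandsberg (r x : ℝ) : ℝ := ∑' m : ℕ, r ^ m * distInt (2 ^ m * x)

lemma summable_takagiLandsberg {r : ℝ} (hr0 : 0 ≤ r) (hr1 : r < 1) (x : ℝ) :
    Summable fun m : ℕ => r ^ m * distInt (2 ^ m * x) :=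
  .of_nonneg_of_le (fun m => by unfold distInt; positivity)
    (fun m => mul_le_mul_of_nonneg_left (distInt_le_half _) (by positivity))
    ((summable_geometric_of_lt_one hr0 hr1).mul_right _)

lemma takagiLandsberg_le {r : ℝ} (hr0 : 0 ≤ r) (hr1 : r < 1) (x : ℝ) :
    takagiLandsberg r x ≤ (1 - r)⁻¹ / 2 := by
  rw [← tsum_geometric_of_lt_one hr0 hr1, ← tsum_div_const]
  refine (summable_takagiLandsberg hr0 hr1 x).tsum_le_tsum (fun m => ?_)
    ((summable_geometric_of_lt_one hr0 hr1).div_const _)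
  rw [div_eq_mul_one_div]
  exact mul_le_mul_of_nonneg_left (distInt_le_half _) (pow_nonneg hr0 m)

lemma takagiLandsberg_eq_add {r : ℝ} (hr0 : 0 ≤ r) (hr1 : r < 1) (x : ℝ) :
    takagiLandsberg r x = distInt x + r * takagiLandsberg r (2 * x) := by
  rw [takagiLandsberg, (summable_takagiLandsberg hr0 hr1 x).tsum_eq_zero_add, takagiLandsberg,
    ← tsum_mul_left]
  simp only [pow_zero, one_mul]
  exact congrArg _ (tsum_congr fun m => by rw [pow_succ, pow_succ, mul_assoc _ 2]; ring)

lemma takagiLandsberg_neg (r x : ℝ) : takagiLandsberg r (-x) = takagiLandsberg r x := by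
  simp only [takagiLandsberg, mul_neg, distInt_neg]

lemma takagiLandsberg_one_sub (r x : ℝ) : takagiLandsberg r (1 - x) = takagiLandsberg r x := by
  refine (tsum_congr fun m => ?_).trans (takagiLandsberg_neg r x)
  rw [show (2 : ℝ) ^ m * (1 - x) = 2 ^ m * -x + ((2 ^ m : ℕ) : ℤ) by push_cast; ring,
    distInt_add_intCast]

lemma takagiLandsberg_sub_le {r : ℝ} (hr0 : 0 ≤ r) (hr1 : r < 1) (a b : ℝ) :
    takagiLandsberg r a - takagiLandsberg r b ≤ takagiLandsberg r (a - b) := by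
  rw [takagiLandsberg, takagiLandsberg,
    ← (summable_takagiLandsberg hr0 hr1 a).tsum_sub (summable_takagiLandsberg hr0 hr1 b)]
  refine ((summable_takagiLandsberg hr0 hr1 a).sub
    (summable_takagiLandsberg hr0 hr1 b)).tsum_le_tsum (fun m => ?_)
    (summable_takagiLandsberg hr0 hr1 _)
  rw [← mul_sub, mul_sub ((2 : ℝ) ^ m)]
  exact mul_le_mul_of_nonneg_left (distInt_sub_distInt_le _ _) (pow_nonneg hr0 m)

lemma abs_takagiLandsberg_sub_le {r : ℝ} (hr0 : 0 ≤ r) (hr1 : r < 1) (a b : ℝ) :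
    |takagiLandsberg r a - takagiLandsberg r b| ≤ takagiLandsberg r (a - b) := by
  refine abs_sub_le_iff.mpr ⟨takagiLandsberg_sub_le hr0 hr1 a b, ?_⟩
  have hba := takagiLandsberg_sub_le hr0 hr1 b a
  rwa [← neg_sub a b, takagiLandsberg_neg] at hba

lemma takagiLandsberg_eq_geom_sum_add {r : ℝ} (hr0 : 0 ≤ r) (hr1 : r < 1) (N : ℕ) {x : ℝ}
    (hx : 0 ≤ x) (hN : 2 ^ N * x ≤ 1) :
    takagiLandsberg r x =
      x * ∑ m ∈ Finset.range N, (2 * r) ^ m + r ^ N * takagiLandsberg r (2 ^ N * x) := by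
  induction N generalizing x with
  | zero => simp
  | succ N ih =>
    have hpow : (2 : ℝ) ≤ 2 ^ (N + 1) := le_self_pow₀ (by norm_num) (by omega)
    have hx2 : 2 * x ≤ 1 := by nlinarith [mul_le_mul_of_nonneg_right hpow hx]
    rw [takagiLandsberg_eq_add hr0 hr1, distInt_of_mem_Icc ⟨hx, by linarith⟩,
      ih (by positivity) (by rwa [← mul_assoc, ← pow_succ]), Finset.sum_range_succ',
      ← mul_assoc, ← pow_succ]
    simp_rw [pow_succ' (2 * r), ← Finset.mul_sum]
    ring

lemma sqrt_two_inv_sq : (√2)⁻¹ ^ 2 = (1 / 2 : ℝ) := by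
  rw [inv_pow, sq_sqrt zero_le_two, one_div]

lemma sqrt_two_inv_mem_Ioo : (√2)⁻¹ ∈ Ioo (7 / 10 : ℝ) (5 / 7) := by
  have hpos : 0 < (√2)⁻¹ := by positivity
  constructor <;> nlinarith [sqrt_two_inv_sq]

lemma takagiLandsberg_sqrt_two_inv_le_of_le_add {ε : ℝ} (hε : 0 ≤ ε)
    (H : ∀ u ∈ Icc (0 : ℝ) (1 / 2),
      takagiLandsberg (√2)⁻¹ u ≤ ((√2)⁻¹ + 2) / 3 + (√2)⁻¹ * u + ε)
    {u : ℝ} (hu : u ∈ Icc (0 : ℝ) (1 / 2)) :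
    takagiLandsberg (√2)⁻¹ u ≤ ((√2)⁻¹ + 2) / 3 + (√2)⁻¹ * u + (√2)⁻¹ * ε := by
  set r := (√2)⁻¹
  obtain ⟨hr0, hr1⟩ : 7 / 10 < r ∧ r < 5 / 7 := sqrt_two_inv_mem_Ioo
  have hr2 : r ^ 2 = 1 / 2 := sqrt_two_inv_sq
  have hrec : ∀ v ∈ Icc (0 : ℝ) (1 / 2),
      takagiLandsberg r v = v + r * takagiLandsberg r (2 * v) := fun v hv => by
    rw [takagiLandsberg_eq_add (by linarith) (by linarith), distInt_of_mem_Icc hv]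
  have hsymm (v : ℝ) : takagiLandsberg r v = takagiLandsberg r (1 - v) :=
    (takagiLandsberg_one_sub r v).symm
  obtain ⟨hu0, hu1⟩ := hu
  rw [hrec u ⟨hu0, hu1⟩]
  -- Modulo `r ^ 2 = 1 / 2`, the excess over the affine bound is `(2 - r) u + r / 3 - 1 / 2` in the
  -- first case (negative up to `u ≈ 0.204`), `(1 - r) (u - 1 / 3)` in the two middle cases and
  -- `r (1 / 3 - u)` in the last.
  rcases le_or_gt u (3 / 16) with ha | ha
  · have hH := H (2 * u) ⟨by linarith, by linarith⟩
    nlinarith [mul_nonneg (sub_nonneg.2 ha) (by linarith : (0 : ℝ) ≤ 2 - r)]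
  rcases le_or_gt u (1 / 4) with hb | hb
  · rw [hrec (2 * u) ⟨by linarith, by linarith⟩, hsymm (2 * (2 * u))]
    have hH := H (1 - 2 * (2 * u)) ⟨by linarith, by linarith⟩
    nlinarith [mul_nonneg (by linarith : (0 : ℝ) ≤ 1 - r) (by linarith : 0 ≤ 1 / 3 - u)]
  rcases le_or_gt u (1 / 3) with hc | hc
  · rw [hsymm (2 * u), hrec (1 - 2 * u) ⟨by linarith, by linarith⟩,
      hsymm (2 * (1 - 2 * u))]
    have hH := H (1 - 2 * (1 - 2 * u)) ⟨by linarith, by linarith⟩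
    nlinarith [mul_nonneg (by linarith : (0 : ℝ) ≤ 1 - r) (by linarith : 0 ≤ 1 / 3 - u)]
  · rw [hsymm (2 * u)]
    have hH := H (1 - 2 * u) ⟨by linarith, by linarith⟩
    nlinarith

lemma takagiLandsberg_sqrt_two_inv_le {u : ℝ} (hu : u ∈ Icc (0 : ℝ) (1 / 2)) :
    takagiLandsberg (√2)⁻¹ u ≤ ((√2)⁻¹ + 2) / 3 + (√2)⁻¹ * u := by
  set r := (√2)⁻¹
  obtain ⟨hr0, hr1⟩ : 7 / 10 < r ∧ r < 5 / 7 := sqrt_two_inv_mem_Ioo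
  have hk (k : ℕ) : ∀ u ∈ Icc (0 : ℝ) (1 / 2),
      takagiLandsberg r u ≤ (r + 2) / 3 + r * u + r ^ k * 2 := by
    induction k with
    | zero =>
      intro u hu
      have hle := takagiLandsberg_le (r := r) (by linarith) (by linarith) u
      have hinv : (1 - r)⁻¹ ≤ 4 := by rw [inv_le_comm₀] <;> linarith
      nlinarith [hu.1]
    | succ k ih =>
      intro u hu
      simpa only [pow_succ', mul_assoc] using
        takagiLandsberg_sqrt_two_inv_le_of_le_add (by positivity) ih hu
  have hlim : Filter.Tendsto (fun k : ℕ => (r + 2) / 3 + r * u + r ^ k * 2) Filter.atTop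
      (nhds ((r + 2) / 3 + r * u)) := by
    simpa using tendsto_const_nhds.add
      ((tendsto_pow_atTop_nhds_zero_of_lt_one (by linarith) (by linarith : r < 1)).mul_const 2)
  exact ge_of_tendsto' hlim fun k => hk k u hu

lemma takagiLandsberg_sqrt_two_inv_le_of_pow_mul_mem {h : ℝ} {N : ℕ} (hh : 0 ≤ h)
    (hN : 2 ^ N * h ∈ Icc (1 / 2 : ℝ) 1) :
    takagiLandsberg (√2)⁻¹ h ≤
      (1 + 1 / √2) * h * √2 ^ N + (1 / 3) * (2 * √2 + 2) * (√2 ^ N)⁻¹ := by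
  obtain ⟨hr0, hr1⟩ : 7 / 10 < (√2)⁻¹ ∧ (√2)⁻¹ < 5 / 7 := sqrt_two_inv_mem_Ioo
  have hs : √2 ^ 2 = 2 := sq_sqrt zero_le_two
  have hs0 : 0 < √2 := by positivity
  have htail := takagiLandsberg_sqrt_two_inv_le (u := 1 - 2 ^ N * h)
    ⟨by linarith [hN.2], by linarith [hN.1]⟩
  rw [takagiLandsberg_one_sub] at htail
  rw [takagiLandsberg_eq_geom_sum_add (by linarith) (by linarith) N hh hN.2,
    show 2 * (√2)⁻¹ = √2 by field_simp; linarith, inv_pow]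
  have hgeom := geom_sum_mul (√2) N
  set G := ∑ m ∈ Finset.range N, √2 ^ m
  set w := √2 ^ N
  have hw : 0 < w := by positivity
  have hG : G = (√2 + 1) * (w - 1) := by linear_combination (√2 + 1) * hgeom - G * hs
  have hw2 : (2 : ℝ) ^ N = w ^ 2 := by rw [← hs, ← pow_mul, mul_comm, pow_mul]
  rw [hw2] at htail
  have htail' : w⁻¹ * takagiLandsberg (√2)⁻¹ (w ^ 2 * h) ≤
      w⁻¹ * (((√2)⁻¹ + 2) / 3 + (√2)⁻¹) - (√2)⁻¹ * w * h := by
    refine (mul_le_mul_of_nonneg_left htail (by positivity)).trans_eq ?_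
    field_simp
    ring
  have hq : (√2)⁻¹ = √2 / 2 := by field_simp; linarith
  rw [hq] at htail'
  rw [hG, hw2, one_div, hq]
  nlinarith [mul_nonneg hh hs0.le]

lemma two_rpow_natCast_div_two (N : ℕ) : (2 : ℝ) ^ ((N : ℝ) / 2) = √2 ^ N := by
  rw [sqrt_eq_rpow, ← rpow_natCast, ← rpow_mul zero_le_two]
  ring_nf

lemma xhat_eq_takagiLandsberg {t : ℝ} (ht : t ∈ Icc (0 : ℝ) 1) :
    xhat t = takagiLandsberg (√2)⁻¹ t := by
  refine tsum_congr fun m => ?_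
  have hpos : (0 : ℝ) < 2 ^ m := by positivity
  simp only [e, Int.cast_natCast, ← Finset.mul_sum]
  rw [sum_range_e00_sub ⟨by nlinarith [ht.1], by push_cast; nlinarith [ht.2]⟩, neg_div,
    rpow_neg zero_le_two, two_rpow_natCast_div_two, inv_pow]

lemma exists_ν_eq_natCast {h : ℝ} (h0 : 0 < h) (h1 : h < 1) :
    ∃ N : ℕ, ν h = N ∧ 2 ^ N * h ∈ Icc (1 / 2 : ℝ) 1 := by
  have hlog : ν h = Int.log 2 h⁻¹ := by
    rw [ν, ← logb_inv]
    exact_mod_cast floor_logb_natCast (b := 2) (inv_nonneg.2 h0.le)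
  have hnn : 0 ≤ Int.log 2 h⁻¹ :=
    (Int.zpow_le_iff_le_log one_lt_two (inv_pos.2 h0)).1
      (by simpa using (one_le_inv₀ h0).2 h1.le)
  obtain ⟨N, hN⟩ := Int.eq_ofNat_of_zero_le hnn
  have hlo := Int.lt_zpow_succ_log_self (R := ℝ) one_lt_two h⁻¹
  have hhi := Int.zpow_log_le_self (R := ℝ) one_lt_two (inv_pos.2 h0)
  rw [hN] at hlo hhi
  push_cast at hlo hhi
  rw [← Nat.cast_succ, zpow_natCast, pow_succ] at hlo
  rw [zpow_natCast] at hhi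
  refine ⟨N, hlog.trans hN, ?_, ?_⟩
  · have hlo' := mul_lt_mul_of_pos_right hlo h0
    rw [inv_mul_cancel₀ h0.ne'] at hlo'
    linarith
  · have hhi' := mul_le_mul_of_nonneg_right hhi h0.le
    rwa [inv_mul_cancel₀ h0.ne'] at hhi'

theorem stmt_11 :
    ∀ h ∈ Set.Ioo (0 : ℝ) 1, ∀ t ∈ Set.Icc (0 : ℝ) (1 - h),
      |xhat (t + h) - xhat t| ≤ ω h := by
  rintro h ⟨h0, h1⟩ t ⟨ht0, ht1⟩
  obtain ⟨N, hν, hN⟩ := exists_ν_eq_natCast h0 h1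
  have hω : ω h = (1 + 1 / √2) * h * √2 ^ N + (1 / 3) * (2 * √2 + 2) * (√2 ^ N)⁻¹ := by
    rw [ω, hν, neg_div, rpow_neg zero_le_two, Int.cast_natCast, two_rpow_natCast_div_two]
  rw [xhat_eq_takagiLandsberg ⟨by linarith, by linarith⟩,
    xhat_eq_takagiLandsberg ⟨ht0, by linarith⟩, hω]
  calc _ ≤ takagiLandsberg (√2)⁻¹ (t + h - t) :=
        abs_takagiLandsberg_sub_le (by positivity) (sqrt_two_inv_mem_Ioo.2.trans (by norm_num)) _ _
    _ ≤ _ := by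
      rw [add_sub_cancel_left]
      exact takagiLandsberg_sqrt_two_inv_le_of_pow_mul_mem h0.le hN
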